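/- Let a, b > 0. Then limsup_{λ→∞} ( card{(m,n) ∈ ℤ_{≥0} × ℤ_{≥1} : m²π²/(4a²) + n²π²/(4b²) ≤ λ} − (ab/π)λ − (2b/π)√λ ) / √λ ≤ 0; that is, the number of such lattice points is at most (ab/π)λ + (2b/π)√λ + o(√λ) as λ → ∞. -/

import Mathlib

/-! Rescaling by `A = 2a√λ/π`, `B = 2b√λ/π` turns the region into the quarter ellipse
`(m/A)² + (n/B)² ≤ 1`. Row `n ∈ [1, B]` holds at most `1 + A√(1 - (n/B)²)` lattice points
(`m` starts at `0`). The `1`'s add up to at most `B = (2b/π)√λ`. The profile decreases, so the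
rest is at most its integral over `[0, B]`, the quarter-ellipse area `πAB/4 = abλ/π`. -/

open Filter Real

theorem integral_sqrt_one_sub_sq_zero_one : ∫ x in (0:ℝ)..1, √(1 - x ^ 2) = π / 4 := by
  have h := integral_sqrt_one_sub_sq
  rw [← intervalIntegral.integral_add_adjacent_intervals (b := 0)] at h
  · have := intervalIntegral.integral_comp_neg (a := (0:ℝ)) (b := 1) (fun x => √(1 - x ^ 2))
    simp only [neg_sq, neg_zero] at this
    linarith
  all_goals exact (by fun_prop : Continuous fun x : ℝ => √(1 - x ^ 2)).intervalIntegrable _ _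

theorem integral_mul_sqrt_one_sub_div_sq (A : ℝ) {B : ℝ} (hB : B ≠ 0) :
    ∫ x in (0:ℝ)..B, A * √(1 - (x / B) ^ 2) = π * A * B / 4 := by
  rw [intervalIntegral.integral_const_mul,
    intervalIntegral.integral_comp_div (fun x => √(1 - x ^ 2)) hB, zero_div, div_self hB,
    integral_sqrt_one_sub_sq_zero_one, smul_eq_mul]
  ring

theorem antitoneOn_mul_sqrt_one_sub_div_sq {A B : ℝ} (hA : 0 ≤ A) (hB : 0 < B) :
    AntitoneOn (fun x => A * √(1 - (x / B) ^ 2)) (Set.Ici 0) := by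
  intro x hx y _ hxy
  have : (x / B) ^ 2 ≤ (y / B) ^ 2 := by
    have : 0 ≤ x := hx
    gcongr
  dsimp only
  gcongr

theorem AntitoneOn.sum_Icc_le_integral {f : ℝ → ℝ} {N : ℕ}
    (hf : AntitoneOn f (Set.Icc 0 N)) :
    ∑ n ∈ Finset.Icc 1 N, f n ≤ ∫ x in (0:ℝ)..N, f x := by
  have h := AntitoneOn.sum_le_integral (x₀ := 0) (a := N) (by rwa [zero_add])
  simp only [zero_add] at h
  rwa [Finset.range_eq_Ico, Finset.sum_Ico_add' (fun i : ℕ => f i) 0 N 1] at h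

theorem Set.ncard_le_sum_add_of_forall_le_graph {S : Set (ℕ × ℕ)} {f : ℝ → ℝ} {N : ℕ}
    (hf : ∀ n ∈ Finset.Icc 1 N, 0 ≤ f n)
    (hS : ∀ p ∈ S, p.2 ∈ Finset.Icc 1 N ∧ (p.1 : ℝ) ≤ f p.2) :
    (S.ncard : ℝ) ≤ ∑ n ∈ Finset.Icc 1 N, f n + N := by
  classical
  set T := (Finset.Icc 1 N).biUnion fun n => Finset.range (⌊f n⌋₊ + 1) ×ˢ {n}
  have hST : S ⊆ T := by
    intro p hp
    obtain ⟨hcol, hrow⟩ := hS p hp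
    simp only [T, Finset.coe_biUnion, Set.mem_iUnion, Finset.mem_coe, Finset.mem_product,
      Finset.mem_range, Finset.mem_singleton]
    exact ⟨p.2, hcol, Nat.lt_succ_of_le (Nat.le_floor hrow), rfl⟩
  calc (S.ncard : ℝ) ≤ T.card := by
        exact_mod_cast (Set.ncard_le_ncard hST).trans_eq (Set.ncard_coe_finset T)
    _ ≤ ∑ n ∈ Finset.Icc 1 N, ((⌊f n⌋₊ : ℝ) + 1) := by
        refine (Nat.cast_le.mpr Finset.card_biUnion_le).trans ?_
        simp
    _ ≤ ∑ n ∈ Finset.Icc 1 N, (f n + 1) := by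
        gcongr with n hn
        exact Nat.floor_le (hf n hn)
    _ = ∑ n ∈ Finset.Icc 1 N, f n + N := by simp [Finset.sum_add_distrib]

theorem ncard_quarter_ellipse_le {A B : ℝ} (hA : 0 < A) (hB : 0 < B) :
    ({p : ℕ × ℕ | 1 ≤ p.2 ∧ ((p.1 : ℝ) / A) ^ 2 + ((p.2 : ℝ) / B) ^ 2 ≤ 1}.ncard : ℝ)
      ≤ π * A * B / 4 + B := by
  set f := fun x : ℝ => A * √(1 - (x / B) ^ 2)
  set N := ⌊B⌋₊
  have hf : AntitoneOn f (Set.Ici 0) := antitoneOn_mul_sqrt_one_sub_div_sq hA.le hB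
  have hf_nonneg : ∀ x, 0 ≤ f x := fun x => by positivity
  have hNB : (N : ℝ) ≤ B := Nat.floor_le hB.le
  have hbelow : ∀ p ∈ {p : ℕ × ℕ | 1 ≤ p.2 ∧ ((p.1 : ℝ) / A) ^ 2 + ((p.2 : ℝ) / B) ^ 2 ≤ 1},
      p.2 ∈ Finset.Icc 1 N ∧ (p.1 : ℝ) ≤ f p.2 := by
    rintro ⟨m, n⟩ ⟨hn, hmn⟩
    have hnB : (n : ℝ) / B ≤ 1 :=
      (pow_le_one_iff_of_nonneg (by positivity) two_ne_zero).mp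
        (by nlinarith [sq_nonneg ((m : ℝ) / A)])
    have hmA : (m : ℝ) / A ≤ √(1 - ((n : ℝ) / B) ^ 2) :=
      (le_abs_self _).trans (abs_le_sqrt (by linarith))
    exact ⟨Finset.mem_Icc.mpr ⟨hn, Nat.le_floor ((div_le_one hB).mp hnB)⟩,
      (div_le_iff₀' hA).mp hmA⟩
  calc _ ≤ ∑ n ∈ Finset.Icc 1 N, f n + N :=
        Set.ncard_le_sum_add_of_forall_le_graph (fun n _ => hf_nonneg n) hbelow
    _ ≤ (∫ x in (0:ℝ)..N, f x) + B :=
        add_le_add (AntitoneOn.sum_Icc_le_integral (hf.mono Set.Icc_subset_Ici_self)) hNB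
    _ ≤ (∫ x in (0:ℝ)..B, f x) + B := by
        gcongr
        exact intervalIntegral.integral_mono_interval le_rfl (Nat.cast_nonneg N) hNB
          (Eventually.of_forall hf_nonneg) ((by fun_prop : Continuous f).intervalIntegrable _ _)
    _ = π * A * B / 4 + B := by rw [integral_mul_sqrt_one_sub_div_sq A hB.ne']

/-- Upper bound for counting lattice points `(m,n)`, `m ≥ 0`, `n ≥ 1`, with
`m²π²/(4a²) + n²π²/(4b²) ≤ λ`: the count is at most
`(ab/π)λ + (2b/π)√λ + o(√λ)` as `λ → ∞`. -/
theorem lattice_count_dirichlet_neumann_upper (a b : ℝ) (ha : 0 < a) (hb : 0 < b) :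
    ∀ ε > 0, ∀ᶠ (lam : ℝ) in atTop,
      ((Nat.card {p : ℕ × ℕ | 1 ≤ p.2 ∧
          (p.1 : ℝ) ^ 2 * π ^ 2 / (4 * a ^ 2)
            + (p.2 : ℝ) ^ 2 * π ^ 2 / (4 * b ^ 2) ≤ lam} : ℝ))
        ≤ a * b / π * lam + 2 * b / π * Real.sqrt lam + ε * Real.sqrt lam := by
  intro ε hε
  filter_upwards [eventually_gt_atTop 0] with lam hlam
  set s := √lam
  have hs : 0 < s := sqrt_pos.mpr hlam
  have hss : s ^ 2 = lam := sq_sqrt hlam.le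
  have hellipse : {p : ℕ × ℕ | 1 ≤ p.2 ∧
      (p.1 : ℝ) ^ 2 * π ^ 2 / (4 * a ^ 2) + (p.2 : ℝ) ^ 2 * π ^ 2 / (4 * b ^ 2) ≤ lam}
      = {p : ℕ × ℕ | 1 ≤ p.2 ∧
          ((p.1 : ℝ) / (2 * a * s / π)) ^ 2 + ((p.2 : ℝ) / (2 * b * s / π)) ^ 2 ≤ 1} := by
    ext p
    simp only [Set.mem_ofPred_eq, ← div_le_one hlam]
    rw [← hss]
    field_simp
    ring_nf
  rw [Nat.card_coe_set_eq, hellipse]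
  calc _ ≤ π * (2 * a * s / π) * (2 * b * s / π) / 4 + 2 * b * s / π :=
        ncard_quarter_ellipse_le (by positivity) (by positivity)
    _ = a * b / π * lam + 2 * b / π * s := by rw [← hss]; field_simp; ring
    _ ≤ _ := le_add_of_nonneg_right (by positivity)
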